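/- arXiv:2411.08846 — 2 statements merged into one kernel-verified Lean document; each statement's English description precedes it below -/
import Mathlib

section
/- The double integral ∫_0^∞ ∫_0^∞ erfc((x+y)/√2) dy dx equals 1/2. -/
open Filter Set MeasureTheory

open Real

/-- The complementary error function. -/
noncomputable def erfc (y : ℝ) : ℝ :=
  (2 / Real.sqrt Real.pi) * ∫ u in Set.Ioi y, Real.exp (-u ^ 2)

noncomputable def Cb : ℝ :=
  (2 / Real.sqrt Real.pi) * ∫ u in Ioi (0:ℝ), Real.exp (-(1/2) * u ^ 2)

noncomputable def Kf (a : ℝ) : ℝ :=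
  a * erfc a - Real.exp (-a ^ 2) / Real.sqrt Real.pi

noncomputable def Hf (a : ℝ) : ℝ :=
  ((1 + 2 * a ^ 2) * erfc a - 2 / Real.sqrt Real.pi * a * Real.exp (-a ^ 2)) / 4


lemma cont_gauss : Continuous (fun u : ℝ => Real.exp (-u ^ 2)) := by fun_prop

lemma integrable_gauss : Integrable (fun u : ℝ => Real.exp (-u ^ 2)) := by
  simpa using integrable_exp_neg_mul_sq one_pos

lemma gauss_Ioi_eq (a : ℝ) :
    ∫ u in Ioi a, Real.exp (-u ^ 2)
      = (∫ u in Ioi (0:ℝ), Real.exp (-u ^ 2)) - ∫ u in (0:ℝ)..a, Real.exp (-u ^ 2) := by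
  have h0 := intervalIntegral.integral_Iic_add_Ioi (μ := volume) (b := (0:ℝ))
    integrable_gauss.integrableOn integrable_gauss.integrableOn
  have ha := intervalIntegral.integral_Iic_add_Ioi (μ := volume) (b := a)
    integrable_gauss.integrableOn integrable_gauss.integrableOn
  have hs := intervalIntegral.integral_Iic_sub_Iic (μ := volume) (a := (0:ℝ)) (b := a)
    integrable_gauss.integrableOn integrable_gauss.integrableOn
  linarith

lemma hasDerivAt_gauss_Ioi (a : ℝ) :
    HasDerivAt (fun a : ℝ => ∫ u in Ioi a, Real.exp (-u ^ 2)) (-Real.exp (-a ^ 2)) a := by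
  rw [show (fun a : ℝ => ∫ u in Ioi a, Real.exp (-u ^ 2)) = _ from funext gauss_Ioi_eq]
  have hD : HasDerivAt (fun x : ℝ => ∫ u in (0:ℝ)..x, Real.exp (-u ^ 2))
      (Real.exp (-a ^ 2)) a :=
    intervalIntegral.integral_hasDerivAt_right integrable_gauss.intervalIntegrable
      (cont_gauss.stronglyMeasurableAtFilter _ _) cont_gauss.continuousAt
  refine ((hasDerivAt_const a _).sub hD).congr_deriv ?_
  simp

lemma hasDerivAt_erfc (a : ℝ) :
    HasDerivAt erfc (-(2 / Real.sqrt Real.pi * Real.exp (-a ^ 2))) a := by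
  refine ((hasDerivAt_gauss_Ioi a).const_mul (2 / Real.sqrt Real.pi)).congr_deriv ?_
  ring

lemma continuous_erfc : Continuous erfc :=
  continuous_iff_continuousAt.2 fun a => (hasDerivAt_erfc a).continuousAt

lemma erfc_zero : erfc 0 = 1 := by
  have h := integral_gaussian_Ioi 1
  simp only [neg_mul, one_mul] at h
  rw [erfc, h]
  rw [div_one]
  field_simp

lemma Cb_nonneg : 0 ≤ Cb := by
  apply mul_nonneg (by positivity)
  exact setIntegral_nonneg measurableSet_Ioi fun u _ => (Real.exp_pos _).le

lemma erfc_nonneg (a : ℝ) : 0 ≤ erfc a :=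
  mul_nonneg (by positivity) <|
    setIntegral_nonneg measurableSet_Ioi fun u _ => (Real.exp_pos _).le

lemma erfc_le {a : ℝ} (ha : 0 ≤ a) : erfc a ≤ Cb * Real.exp (-(1/2) * a ^ 2) := by
  have hint : IntegrableOn (fun u : ℝ => Real.exp (-(1/2) * a ^ 2) * Real.exp (-(1/2) * u ^ 2))
      (Ioi a) := ((integrable_exp_neg_mul_sq (by norm_num : (0:ℝ) < 1/2)).integrableOn.const_mul _)
  have hint0 : IntegrableOn (fun u : ℝ => Real.exp (-u ^ 2)) (Ioi a) := by
    have : Integrable (fun u : ℝ => Real.exp (-u ^ 2)) := by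
      simpa using integrable_exp_neg_mul_sq one_pos
    exact this.integrableOn
  have h1 : ∫ u in Ioi a, Real.exp (-u ^ 2)
      ≤ ∫ u in Ioi a, Real.exp (-(1/2) * a ^ 2) * Real.exp (-(1/2) * u ^ 2) := by
    apply setIntegral_mono_on hint0 hint measurableSet_Ioi
    intro u hu
    rw [← Real.exp_add]
    apply Real.exp_le_exp.2
    have hau : a ≤ u := le_of_lt hu
    have h2 : a ^ 2 ≤ u ^ 2 := pow_le_pow_left₀ ha hau 2
    linarith
  have h2 : ∫ u in Ioi a, Real.exp (-(1/2) * a ^ 2) * Real.exp (-(1/2) * u ^ 2)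
      = Real.exp (-(1/2) * a ^ 2) * ∫ u in Ioi a, Real.exp (-(1/2) * u ^ 2) :=
    integral_const_mul _ _
  have h3 : ∫ u in Ioi a, Real.exp (-(1/2) * u ^ 2)
      ≤ ∫ u in Ioi (0:ℝ), Real.exp (-(1/2) * u ^ 2) := by
    apply setIntegral_mono_set
      (integrable_exp_neg_mul_sq (by norm_num : (0:ℝ) < 1/2)).integrableOn
      (Eventually.of_forall fun u => (Real.exp_pos _).le)
    exact HasSubset.Subset.eventuallyLE (Ioi_subset_Ioi ha)
  have hexp : (0:ℝ) < Real.exp (-(1/2) * a ^ 2) := Real.exp_pos _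
  rw [erfc, Cb]
  have : (0:ℝ) ≤ 2 / Real.sqrt Real.pi := by positivity
  calc (2 / Real.sqrt Real.pi) * ∫ u in Ioi a, Real.exp (-u ^ 2)
      ≤ (2 / Real.sqrt Real.pi) *
        (Real.exp (-(1/2) * a ^ 2) * ∫ u in Ioi (0:ℝ), Real.exp (-(1/2) * u ^ 2)) := by
        apply mul_le_mul_of_nonneg_left _ this
        exact h1.trans (h2.le.trans (mul_le_mul_of_nonneg_left h3 hexp.le))
    _ = (2 / Real.sqrt Real.pi * ∫ u in Ioi (0:ℝ), Real.exp (-(1/2) * u ^ 2)) *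
        Real.exp (-(1/2) * a ^ 2) := by ring

lemma tendsto_rpow_gauss (s : ℝ) {b : ℝ} (hb : 0 < b) :
    Tendsto (fun a : ℝ => a ^ s * Real.exp (-b * a ^ 2)) atTop (nhds 0) := by
  refine (rpow_mul_exp_neg_mul_sq_isLittleO_exp_neg hb s).trans_tendsto ?_
  have : Tendsto (fun x : ℝ => (1/2) * x) atTop atTop :=
    Tendsto.const_mul_atTop (by norm_num) tendsto_id
  have h2 := Real.tendsto_exp_neg_atTop_nhds_zero.comp this
  rw [Function.comp_def] at h2
  refine h2.congr fun x => by norm_num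

lemma tendsto_gauss : Tendsto (fun a : ℝ => Real.exp (-a ^ 2)) atTop (nhds 0) := by
  simpa using tendsto_rpow_gauss 0 one_pos

lemma tendsto_mul_gauss {b : ℝ} (hb : 0 < b) :
    Tendsto (fun a : ℝ => a * Real.exp (-b * a ^ 2)) atTop (nhds 0) := by
  have := tendsto_rpow_gauss 1 hb
  simpa [Real.rpow_one] using this

lemma tendsto_sq_mul_gauss {b : ℝ} (hb : 0 < b) :
    Tendsto (fun a : ℝ => a ^ 2 * Real.exp (-b * a ^ 2)) atTop (nhds 0) := by
  have := tendsto_rpow_gauss 2 hb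
  refine this.congr' ?_
  filter_upwards [eventually_gt_atTop (0:ℝ)] with a ha
  rw [Real.rpow_two]

lemma hasDerivAt_Kf (a : ℝ) : HasDerivAt Kf (erfc a) a := by
  have h1 : HasDerivAt (fun a : ℝ => a * erfc a)
      (1 * erfc a + a * -(2 / Real.sqrt Real.pi * Real.exp (-a ^ 2))) a :=
    (hasDerivAt_id a).mul (hasDerivAt_erfc a)
  have h2 : HasDerivAt (fun a : ℝ => Real.exp (-a ^ 2) / Real.sqrt Real.pi)
      ((Real.exp (-a ^ 2) * -(2 * a)) / Real.sqrt Real.pi) a := by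
    have : HasDerivAt (fun a : ℝ => Real.exp (-a ^ 2)) (Real.exp (-a ^ 2) * -(2 * a)) a := by
      have hinner : HasDerivAt (fun a : ℝ => -a ^ 2) (-(2 * a)) a := by
        refine ((hasDerivAt_pow 2 a)).neg.congr_deriv ?_
        simp
      exact (Real.hasDerivAt_exp (-a ^ 2)).comp a hinner
    exact this.div_const _
  have := h1.sub h2
  refine this.congr_deriv (Eq.symm ?_)
  have hpi : Real.sqrt Real.pi ≠ 0 := by positivity
  field_simp
  ring

lemma hasDerivAt_Hf (a : ℝ) : HasDerivAt Hf (Kf a) a := by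
  have hexp : HasDerivAt (fun a : ℝ => Real.exp (-a ^ 2)) (Real.exp (-a ^ 2) * -(2 * a)) a := by
    have hinner : HasDerivAt (fun a : ℝ => -a ^ 2) (-(2 * a)) a := by
      refine ((hasDerivAt_pow 2 a)).neg.congr_deriv ?_
      simp
    exact (Real.hasDerivAt_exp (-a ^ 2)).comp a hinner
  have h1 : HasDerivAt (fun a : ℝ => (1 + 2 * a ^ 2) * erfc a)
      ((2 * (2 * a)) * erfc a + (1 + 2 * a ^ 2) * -(2 / Real.sqrt Real.pi * Real.exp (-a ^ 2)))
      a := by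
    have hp : HasDerivAt (fun a : ℝ => 1 + 2 * a ^ 2) (2 * (2 * a)) a := by
      simpa using ((hasDerivAt_pow 2 a).const_mul 2).const_add 1
    exact hp.mul (hasDerivAt_erfc a)
  have h2 : HasDerivAt (fun a : ℝ => 2 / Real.sqrt Real.pi * a * Real.exp (-a ^ 2))
      (2 / Real.sqrt Real.pi * (1 * Real.exp (-a ^ 2) + a * (Real.exp (-a ^ 2) * -(2 * a)))) a := by
    have := ((hasDerivAt_id a).mul hexp).const_mul (2 / Real.sqrt Real.pi)
    simpa [mul_assoc] using this
  have := (h1.sub h2).div_const 4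
  refine this.congr_deriv (Eq.symm ?_)
  have hpi : Real.sqrt Real.pi ≠ 0 := by positivity
  rw [Kf]
  field_simp
  ring

lemma Hf_zero : Hf 0 = erfc 0 / 4 := by simp [Hf]

lemma tendsto_mul_erfc : Tendsto (fun a : ℝ => a * erfc a) atTop (nhds 0) := by
  apply squeeze_zero' (g := fun a : ℝ => Cb * (a * Real.exp (-(1/2) * a ^ 2)))
  · filter_upwards [eventually_ge_atTop (0:ℝ)] with a ha
    exact mul_nonneg ha (erfc_nonneg a)
  · filter_upwards [eventually_ge_atTop (0:ℝ)] with a ha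
    calc a * erfc a ≤ a * (Cb * Real.exp (-(1/2) * a ^ 2)) :=
          mul_le_mul_of_nonneg_left (erfc_le ha) ha
      _ = Cb * (a * Real.exp (-(1/2) * a ^ 2)) := by ring
  · simpa using (tendsto_mul_gauss (by norm_num : (0:ℝ) < 1/2)).const_mul Cb

lemma tendsto_sq_mul_erfc :
    Tendsto (fun a : ℝ => (1 + 2 * a ^ 2) * erfc a) atTop (nhds 0) := by
  apply squeeze_zero' (g := fun a : ℝ =>
    Cb * Real.exp (-(1/2) * a ^ 2) + 2 * Cb * (a ^ 2 * Real.exp (-(1/2) * a ^ 2)))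
  · filter_upwards [eventually_ge_atTop (0:ℝ)] with a ha
    exact mul_nonneg (by positivity) (erfc_nonneg a)
  · filter_upwards [eventually_ge_atTop (0:ℝ)] with a ha
    calc (1 + 2 * a ^ 2) * erfc a ≤ (1 + 2 * a ^ 2) * (Cb * Real.exp (-(1/2) * a ^ 2)) :=
          mul_le_mul_of_nonneg_left (erfc_le ha) (by positivity)
      _ = Cb * Real.exp (-(1/2) * a ^ 2) + 2 * Cb * (a ^ 2 * Real.exp (-(1/2) * a ^ 2)) := by
          ring
  · have h1 := (tendsto_mul_gauss (b := 1/2) (by norm_num))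
    have he : Tendsto (fun a : ℝ => Cb * Real.exp (-(1/2) * a ^ 2)) atTop (nhds 0) := by
      have : Tendsto (fun a : ℝ => Real.exp (-(1/2) * a ^ 2)) atTop (nhds 0) := by
        apply squeeze_zero' (g := fun a : ℝ => a * Real.exp (-(1/2) * a ^ 2))
        · exact Eventually.of_forall fun a => (Real.exp_pos _).le
        · filter_upwards [eventually_ge_atTop (1:ℝ)] with a ha
          nlinarith [Real.exp_pos (-(1/2) * a ^ 2)]
        · exact tendsto_mul_gauss (by norm_num)
      simpa using this.const_mul Cb
    have h2 := (tendsto_sq_mul_gauss (b := 1/2) (by norm_num)).const_mul (2 * Cb)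
    simpa using he.add h2

lemma tendsto_Kf : Tendsto Kf atTop (nhds 0) := by
  have := tendsto_mul_erfc.sub (tendsto_gauss.div_const (Real.sqrt Real.pi))
  unfold Kf
  simpa using this

lemma tendsto_Hf : Tendsto Hf atTop (nhds 0) := by
  have h2 : Tendsto (fun a : ℝ => 2 / Real.sqrt Real.pi * a * Real.exp (-a ^ 2)) atTop
      (nhds 0) := by
    have := (tendsto_mul_gauss (b := 1) one_pos).const_mul (2 / Real.sqrt Real.pi)
    simpa [mul_assoc] using this
  have := (tendsto_sq_mul_erfc.sub h2).div_const 4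
  unfold Hf
  simpa using this

lemma sqrt2_pos : 0 < Real.sqrt 2 := Real.sqrt_pos.2 two_pos
lemma sqrt2_sq : Real.sqrt 2 ^ 2 = 2 := Real.sq_sqrt two_pos.le

lemma continuous_Kf : Continuous Kf :=
  continuous_iff_continuousAt.2 fun a => (hasDerivAt_Kf a).continuousAt

lemma tendsto_affine (x : ℝ) :
    Tendsto (fun y : ℝ => (x + y) / Real.sqrt 2) atTop atTop :=
  (tendsto_atTop_add_const_left atTop x tendsto_id).atTop_div_const sqrt2_pos

lemma inner_integrable {x : ℝ} (hx : 0 ≤ x) :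
    IntegrableOn (fun y : ℝ => erfc ((x + y) / Real.sqrt 2)) (Ioi 0) := by
  have hg : IntegrableOn (fun y : ℝ => Cb * Real.exp (-(1/4) * y ^ 2)) (Ioi 0) :=
    ((integrable_exp_neg_mul_sq (by norm_num : (0:ℝ) < 1/4)).const_mul Cb).integrableOn
  apply Integrable.mono' hg
  · exact ((continuous_erfc.comp (by continuity)).aestronglyMeasurable).restrict
  · filter_upwards [ae_restrict_mem measurableSet_Ioi] with y hy
    have hy0 : (0:ℝ) ≤ y := (le_of_lt hy)
    have ht0 : (0:ℝ) ≤ (x + y) / Real.sqrt 2 := by positivity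
    rw [Real.norm_eq_abs, abs_of_nonneg (erfc_nonneg _)]
    refine (erfc_le ht0).trans ?_
    apply mul_le_mul_of_nonneg_left _ Cb_nonneg
    apply Real.exp_le_exp.2
    rw [div_pow, sqrt2_sq]
    nlinarith

lemma inner_eval {x : ℝ} (hx : 0 ≤ x) :
    ∫ y in Ioi (0:ℝ), erfc ((x + y) / Real.sqrt 2)
      = 0 - Real.sqrt 2 * Kf (x / Real.sqrt 2) := by
  have hf : ∀ y : ℝ, HasDerivAt (fun y : ℝ => Real.sqrt 2 * Kf ((x + y) / Real.sqrt 2))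
      (erfc ((x + y) / Real.sqrt 2)) y := by
    intro y
    have haff : HasDerivAt (fun y : ℝ => (x + y) / Real.sqrt 2) (1 / Real.sqrt 2) y :=
      ((hasDerivAt_id y).const_add x).div_const _
    have := ((hasDerivAt_Kf ((x + y) / Real.sqrt 2)).comp y haff).const_mul (Real.sqrt 2)
    refine this.congr_deriv (Eq.symm ?_)
    field_simp
  have htend : Tendsto (fun y : ℝ => Real.sqrt 2 * Kf ((x + y) / Real.sqrt 2)) atTop
      (nhds 0) := by
    simpa using (tendsto_Kf.comp (tendsto_affine x)).const_mul (Real.sqrt 2)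
  have := integral_Ioi_of_hasDerivAt_of_tendsto
    ((hf 0).continuousAt.continuousWithinAt) (fun y _ => hf y) (inner_integrable hx) htend
  rw [this]
  norm_num

theorem double_integral_erfc :
    ∫ x in Set.Ioi (0 : ℝ), ∫ y in Set.Ioi (0 : ℝ), erfc ((x + y) / Real.sqrt 2)
      = 1 / 2 := by
  rw [setIntegral_congr_fun measurableSet_Ioi (fun x hx => inner_eval (le_of_lt hx))]
  have hF : ∀ x : ℝ, HasDerivAt (fun x : ℝ => -(2 * Hf (x / Real.sqrt 2)))
      (0 - Real.sqrt 2 * Kf (x / Real.sqrt 2)) x := by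
    intro x
    have haff : HasDerivAt (fun x : ℝ => x / Real.sqrt 2) (1 / Real.sqrt 2) x :=
      (hasDerivAt_id x).div_const _
    have := (((hasDerivAt_Hf (x / Real.sqrt 2)).comp x haff).const_mul 2).neg
    refine this.congr_deriv (Eq.symm ?_)
    field_simp
    linear_combination (-Kf (x / Real.sqrt 2)) * sqrt2_sq
  have hint : IntegrableOn (fun x : ℝ => 0 - Real.sqrt 2 * Kf (x / Real.sqrt 2)) (Ioi 0) := by
    have hg : IntegrableOn (fun x : ℝ =>
        Cb * (x * Real.exp (-(1/4) * x ^ 2))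
          + Real.sqrt 2 / Real.sqrt Real.pi * Real.exp (-(1/2) * x ^ 2)) (Ioi 0) :=
      (((integrable_mul_exp_neg_mul_sq (by norm_num : (0:ℝ) < 1/4)).const_mul Cb).add
        ((integrable_exp_neg_mul_sq (by norm_num : (0:ℝ) < 1/2)).const_mul _)).integrableOn
    apply Integrable.mono' hg
    · exact (continuous_const.sub (continuous_const.mul
        (continuous_Kf.comp (continuous_id.div_const _)))).aestronglyMeasurable.restrict
    · filter_upwards [ae_restrict_mem measurableSet_Ioi] with x hx
      have hx0 : (0:ℝ) ≤ x := le_of_lt hx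
      have ht0 : (0:ℝ) ≤ x / Real.sqrt 2 := by positivity
      have hb := erfc_le ht0
      have hb0 := erfc_nonneg (x / Real.sqrt 2)
      have harg : (x / Real.sqrt 2) ^ 2 = x ^ 2 / 2 := by rw [div_pow, sqrt2_sq]
      rw [Real.norm_eq_abs]
      have hK : |Kf (x / Real.sqrt 2)|
          ≤ x / Real.sqrt 2 * erfc (x / Real.sqrt 2)
            + Real.exp (-(x / Real.sqrt 2) ^ 2) / Real.sqrt Real.pi := by
        rw [Kf]
        refine (abs_sub _ _).trans (le_of_eq ?_)
        rw [abs_of_nonneg (mul_nonneg ht0 hb0), abs_of_nonneg (by positivity)]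
      have habs : |0 - Real.sqrt 2 * Kf (x / Real.sqrt 2)|
          ≤ Real.sqrt 2 * (x / Real.sqrt 2 * erfc (x / Real.sqrt 2))
            + Real.sqrt 2 * (Real.exp (-(x / Real.sqrt 2) ^ 2) / Real.sqrt Real.pi) := by
        rw [zero_sub, abs_neg, abs_mul, abs_of_nonneg sqrt2_pos.le]
        calc Real.sqrt 2 * |Kf (x / Real.sqrt 2)|
            ≤ Real.sqrt 2 * (x / Real.sqrt 2 * erfc (x / Real.sqrt 2)
              + Real.exp (-(x / Real.sqrt 2) ^ 2) / Real.sqrt Real.pi) :=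
              mul_le_mul_of_nonneg_left hK sqrt2_pos.le
          _ = _ := by ring
      refine habs.trans ?_
      have e1 : Real.sqrt 2 * (x / Real.sqrt 2 * erfc (x / Real.sqrt 2))
          = x * erfc (x / Real.sqrt 2) := by field_simp
      have e2 : -(x / Real.sqrt 2) ^ 2 = -(1/2) * x ^ 2 := by rw [harg]; ring
      rw [e1, e2]
      have t1 : x * erfc (x / Real.sqrt 2) ≤ Cb * (x * Real.exp (-(1/4) * x ^ 2)) := by
        have := mul_le_mul_of_nonneg_left hb hx0
        refine this.trans (le_of_eq ?_)
        rw [harg]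
        ring_nf
      have t2 : Real.sqrt 2 * (Real.exp (-(1/2) * x ^ 2) / Real.sqrt Real.pi)
          = Real.sqrt 2 / Real.sqrt Real.pi * Real.exp (-(1/2) * x ^ 2) := by ring
      linarith [le_of_eq t2]
  have htend : Tendsto (fun x : ℝ => -(2 * Hf (x / Real.sqrt 2))) atTop (nhds 0) := by
    have hdiv : Tendsto (fun x : ℝ => x / Real.sqrt 2) atTop atTop :=
      tendsto_id.atTop_div_const sqrt2_pos
    simpa using ((tendsto_Hf.comp hdiv).const_mul 2).neg
  have := integral_Ioi_of_hasDerivAt_of_tendsto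
    ((hF 0).continuousAt.continuousWithinAt) (fun x _ => hF x) hint htend
  rw [this]
  simp [Hf, erfc_zero]
  norm_num
end

section
/- Let (Ω, F, P) be a probability space, (F^n_i)_{i} discrete filtrations, (χ^n_i) random variables with χ^n_i measurable with respect to F^n_i, and U a random variable. If ∑_{i=1}^n E(χ^n_i | F^n_{i-1}) converges in probability to U and ∑_{i=1}^n E((χ^n_i)² | F^n_{i-1}) converges in probability to 0, then ∑_{i=1}^n χ^n_i converges in probability to U. -/
open Filter MeasureTheory ProbabilityTheory
open scoped ENNReal

section Aux

variable {Ω : Type*} {mΩ : MeasurableSpace Ω} {P : Measure Ω}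

lemma aux_integrable_mul {f g : Ω → ℝ} (hf : MemLp f 2 P) (hg : MemLp g 2 P) :
    Integrable (fun ω => f ω * g ω) P := by
  have h12 : (1:ℝ≥0∞)/1 = 1/2 + 1/2 := by
    rw [ENNReal.div_add_div_same, one_add_one_eq_two,
      ENNReal.div_self (a := 2) (by norm_num) (by norm_num), one_div_one]
  have h : MemLp (f • g) 1 P := hg.smul hf
  exact (memLp_one_iff_integrable.1 h).congr (by
    filter_upwards with ω; simp [smul_eq_mul])

lemma memℒp_two_condexp [IsProbabilityMeasure P] {m : MeasurableSpace Ω} (hm : m ≤ mΩ)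
    {f : Ω → ℝ} (hf : MemLp f 2 P) : MemLp (P[f|m]) 2 P := by
  letI : MeasurableSpace Ω := mΩ
  have hfi : Integrable f P := hf.integrable one_le_two
  set F : Lp ℝ 2 P := hf.toLp f with hF
  set gm := condExpL2 ℝ ℝ hm F with hgm
  set gl : Lp ℝ 2 P := (gm : Lp ℝ 2 P) with hgl
  have hgae : (gl : Ω → ℝ) =ᵐ[P] P[f|m] := by
    refine ae_eq_condExp_of_forall_setIntegral_eq hm hfi ?_ ?_ ?_
    · intro s _ _
      exact ((Lp.memLp gl).integrable one_le_two).integrableOn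
    · intro s hs hμs
      have h1 : ∫ x in s, (gl : Ω → ℝ) x ∂P = ∫ x in s, (F : Ω → ℝ) x ∂P :=
        integral_condExpL2_eq hm F hs hμs.ne
      rw [h1]
      exact setIntegral_congr_ae (hm s hs) ((hf.coeFn_toLp).mono fun x hx _ => hx)
    · exact lpMeas.aestronglyMeasurable gm
  exact MemLp.ae_eq hgae (Lp.memLp gl)

lemma sum_trunc_le_min {b : ℕ → ℝ} {η : ℝ} (hη : 0 ≤ η) :
    ∀ n : ℕ, (∀ i ∈ Finset.Icc 1 n, 0 ≤ b i) →
      ∑ i ∈ Finset.Icc 1 n, (if (∑ j ∈ Finset.Icc 1 i, b j) ≤ η then b i else 0)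
        ≤ min (∑ j ∈ Finset.Icc 1 n, b j) η := by
  intro n
  induction n with
  | zero => intro _; simp [hη]
  | succ n ih =>
    intro hb
    have hb' : ∀ i ∈ Finset.Icc 1 n, 0 ≤ b i := fun i hi => hb i
      (Finset.mem_Icc.2 ⟨(Finset.mem_Icc.1 hi).1, (Finset.mem_Icc.1 hi).2.trans (Nat.le_succ n)⟩)
    have hbn : 0 ≤ b (n + 1) := hb _ (Finset.mem_Icc.2 ⟨Nat.succ_le_succ (Nat.zero_le n), le_rfl⟩)
    have h1 := ih hb'
    have e1 : ∑ i ∈ Finset.Icc 1 (n + 1),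
        (if (∑ j ∈ Finset.Icc 1 i, b j) ≤ η then b i else 0)
        = (∑ i ∈ Finset.Icc 1 n, (if (∑ j ∈ Finset.Icc 1 i, b j) ≤ η then b i else 0))
          + (if (∑ j ∈ Finset.Icc 1 (n + 1), b j) ≤ η then b (n + 1) else 0) :=
      Finset.sum_Icc_succ_top (Nat.succ_le_succ (Nat.zero_le n)) _
    have e2 : ∑ j ∈ Finset.Icc 1 (n + 1), b j = (∑ j ∈ Finset.Icc 1 n, b j) + b (n + 1) :=
      Finset.sum_Icc_succ_top (Nat.succ_le_succ (Nat.zero_le n)) _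
    rw [e1, e2]
    by_cases h : (∑ j ∈ Finset.Icc 1 (n + 1), b j) ≤ η
    · rw [e2] at h
      rw [if_pos h]
      have hm1 := min_le_left (∑ j ∈ Finset.Icc 1 n, b j) η
      exact le_min (by linarith) (by linarith)
    · rw [e2] at h
      rw [if_neg h]
      have hm1 := min_le_left (∑ j ∈ Finset.Icc 1 n, b j) η
      have hm2 := min_le_right (∑ j ∈ Finset.Icc 1 n, b j) η
      simp only [add_zero]
      exact le_min (by linarith) (by linarith)

lemma sum_trunc_le {b : ℕ → ℝ} {η : ℝ} (hη : 0 ≤ η) (n : ℕ)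
    (hb : ∀ i ∈ Finset.Icc 1 n, 0 ≤ b i) :
    ∑ i ∈ Finset.Icc 1 n, (if (∑ j ∈ Finset.Icc 1 i, b j) ≤ η then b i else 0) ≤ η :=
  (sum_trunc_le_min hη n hb).trans (min_le_right _ _)

lemma key_estimate [IsProbabilityMeasure P]
    (m : ℕ → MeasurableSpace Ω) (hle : ∀ i, m i ≤ mΩ) (hmono : Monotone m)
    (f : ℕ → Ω → ℝ) (hmeas : ∀ i, Measurable[m i] (f i))
    (hsq : ∀ i, Integrable (fun ω => (f i ω) ^ 2) P)
    (n : ℕ) {η ε : ℝ} (hη : 0 < η) (hε : 0 < ε) :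
    P {ω | ε ≤ |∑ i ∈ Finset.Icc 1 n, (f i ω - (P[f i|m (i - 1)]) ω)|}
      ≤ P {ω | η < ∑ i ∈ Finset.Icc 1 n, (P[fun ω' => (f i ω') ^ 2|m (i - 1)]) ω}
        + ENNReal.ofReal (η / ε ^ 2) := by
  set c : ℕ → Ω → ℝ := fun i => P[f i|m (i - 1)] with hcdef
  set q : ℕ → Ω → ℝ := fun i => P[fun ω' => (f i ω') ^ 2|m (i - 1)] with hqdef
  have hc' : ∀ i, c i = P[f i|m (i - 1)] := fun i => rfl
  have hq' : ∀ i, q i = P[fun ω' => (f i ω') ^ 2|m (i - 1)] := fun i => rfl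
  show P {ω | ε ≤ |∑ i ∈ Finset.Icc 1 n, (f i ω - c i ω)|}
      ≤ P {ω | η < ∑ i ∈ Finset.Icc 1 n, q i ω} + ENNReal.ofReal (η / ε ^ 2)
  have hfAE : ∀ i, AEStronglyMeasurable (f i) P := fun i =>
    ((hmeas i).mono (hle i) le_rfl).aestronglyMeasurable
  have hfSM : ∀ i, StronglyMeasurable[m i] (f i) := fun i => (hmeas i).stronglyMeasurable
  have hf2 : ∀ i, MemLp (f i) 2 P := fun i => (memLp_two_iff_integrable_sq (hfAE i)).2 (hsq i)
  have hfint : ∀ i, Integrable (f i) P := fun i => (hf2 i).integrable one_le_two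
  have hc2 : ∀ i, MemLp (c i) 2 P := fun i => memℒp_two_condexp (hle (i - 1)) (hf2 i)
  have hcint : ∀ i, Integrable (c i) P := fun i => integrable_condExp
  have hcSM : ∀ i, StronglyMeasurable[m (i - 1)] (c i) := fun i => stronglyMeasurable_condExp
  have hqSM : ∀ i, StronglyMeasurable[m (i - 1)] (q i) := fun i => stronglyMeasurable_condExp
  have hqint : ∀ i, Integrable (q i) P := fun i => integrable_condExp
  have hq0 : ∀ᵐ ω ∂P, ∀ i, 0 ≤ q i ω := by
    rw [ae_all_iff]
    intro i
    have h := condExp_nonneg (μ := P) (m := m (i - 1))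
      (f := fun ω' => (f i ω') ^ 2) (Filter.Eventually.of_forall fun ω => sq_nonneg _)
    filter_upwards [h] with ω hω
    simpa using hω
  set D : ℕ → Ω → ℝ := fun i => f i - c i with hDdef
  have hD' : ∀ i ω, D i ω = f i ω - c i ω := fun i ω => rfl
  have hD2 : ∀ i, MemLp (D i) 2 P := fun i => (hf2 i).sub (hc2 i)
  have hDint : ∀ i, Integrable (D i) P := fun i => (hD2 i).integrable one_le_two
  have hDSM : ∀ i, StronglyMeasurable[m i] (D i) := fun i =>
    (hfSM i).sub ((hcSM i).mono (hmono (Nat.sub_le i 1)))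
  have hDsq_int : ∀ i, Integrable (fun ω => D i ω ^ 2) P := fun i => (hD2 i).integrable_sq
  have hVmeas : ∀ k, Measurable[m (k - 1)] (fun ω => ∑ j ∈ Finset.Icc 1 k, q j ω) := by
    intro k
    refine Finset.measurable_sum _ fun j hj => ?_
    exact ((hqSM j).measurable).mono (hmono (Nat.sub_le_sub_right (Finset.mem_Icc.1 hj).2 1)) le_rfl
  set s : ℕ → Set Ω := fun i => {ω | ∑ j ∈ Finset.Icc 1 i, q j ω ≤ η} with hsdef
  have hsm : ∀ i, MeasurableSet[m (i - 1)] (s i) := fun i =>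
    measurableSet_le (hVmeas i) measurable_const
  have hsmΩ : ∀ i, MeasurableSet (s i) := fun i => hle (i - 1) _ (hsm i)
  set g : ℕ → Ω → ℝ := fun i => (s i).indicator (D i) with hgdef
  set e : ℕ → Ω → ℝ := fun i => (s i).indicator (fun _ => (1 : ℝ)) with hedef
  have heSM : ∀ i, StronglyMeasurable[m (i - 1)] (e i) := fun i =>
    stronglyMeasurable_const.indicator (hsm i)
  have he01 : ∀ i ω, e i ω = 0 ∨ e i ω = 1 := by
    intro i ω
    by_cases hω : ω ∈ s i
    · right; simp [hedef, Set.indicator_of_mem hω]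
    · left; simp [hedef, Set.indicator_of_notMem hω]
  have hgSM : ∀ i, StronglyMeasurable[m i] (g i) := fun i =>
    (hDSM i).indicator (hmono (Nat.sub_le i 1) _ (hsm i))
  have hg2 : ∀ i, MemLp (g i) 2 P := fun i => MemLp.indicator (hsmΩ i) (hD2 i)
  have hgint : ∀ i, Integrable (g i) P := fun i => (hg2 i).integrable one_le_two
  have hge : ∀ i ω, g i ω = e i ω * D i ω := by
    intro i ω
    by_cases hω : ω ∈ s i
    · simp [hgdef, hedef, Set.indicator_of_mem hω]
    · simp [hgdef, hedef, Set.indicator_of_notMem hω]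
  set N : Ω → ℝ := fun ω => ∑ i ∈ Finset.Icc 1 n, g i ω with hNdef
  have hD0 : ∀ i, P[D i|m (i - 1)] =ᵐ[P] 0 := by
    intro i
    have h1 : P[D i|m (i - 1)] =ᵐ[P] P[f i|m (i - 1)] - P[c i|m (i - 1)] :=
      condExp_sub (hfint i) (hcint i) _
    have h2 : P[c i|m (i - 1)] = c i :=
      condExp_of_stronglyMeasurable (hle (i - 1)) (hcSM i) (hcint i)
    filter_upwards [h1] with ω hω
    rw [hω, Pi.sub_apply, h2, Pi.zero_apply, ← hc' i, sub_self]
  have hmul_int : ∀ i j, Integrable (fun ω => g i ω * g j ω) P := fun i j =>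
    aux_integrable_mul (hg2 i) (hg2 j)
  have horth : ∀ i j, i < j → ∫ ω, g i ω * g j ω ∂P = 0 := by
    intro i j hij
    have hij' : i ≤ j - 1 := Nat.le_sub_one_of_lt hij
    have hφSM : StronglyMeasurable[m (j - 1)] (fun ω => g i ω * e j ω) :=
      ((hgSM i).mono (hmono hij')).mul (heSM j)
    have hprod : ∀ ω, g i ω * g j ω = ((fun ω => g i ω * e j ω) * D j) ω := by
      intro ω
      rw [Pi.mul_apply, hge j ω]
      ring
    have hint2 : Integrable ((fun ω => g i ω * e j ω) * D j) P :=
      (hmul_int i j).congr (Filter.Eventually.of_forall hprod)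
    have hpull : P[(fun ω => g i ω * e j ω) * D j|m (j - 1)]
        =ᵐ[P] (fun ω => g i ω * e j ω) * P[D j|m (j - 1)] :=
      condExp_mul_of_stronglyMeasurable_left hφSM hint2 (hDint j)
    have hzero : P[(fun ω => g i ω * e j ω) * D j|m (j - 1)] =ᵐ[P] 0 := by
      filter_upwards [hpull, hD0 j] with ω h1 h2
      rw [h1, Pi.mul_apply, h2]
      simp
    calc ∫ ω, g i ω * g j ω ∂P
        = ∫ ω, ((fun ω => g i ω * e j ω) * D j) ω ∂P := by
          exact integral_congr_ae (Filter.Eventually.of_forall hprod)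
      _ = ∫ ω, (P[(fun ω => g i ω * e j ω) * D j|m (j - 1)]) ω ∂P :=
          (integral_condExp (hle (j - 1))).symm
      _ = 0 := by
          rw [integral_congr_ae hzero]
          simp
  have hcf_int : ∀ i, Integrable (fun ω => c i ω * f i ω) P := fun i =>
    aux_integrable_mul (hc2 i) (hf2 i)
  have hc_sq_int : ∀ i, Integrable (fun ω => c i ω ^ 2) P := fun i => (hc2 i).integrable_sq
  have hcondD : ∀ i, P[fun ω => D i ω ^ 2|m (i - 1)] ≤ᵐ[P] q i := by
    intro i
    have hdecomp : (fun ω => D i ω ^ 2)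
        = (fun ω => f i ω ^ 2 + c i ω ^ 2) - (2 : ℝ) • (fun ω => c i ω * f i ω) := by
      funext ω
      simp only [Pi.sub_apply, Pi.smul_apply, smul_eq_mul, hD' i ω]
      ring
    have hu_int : Integrable (fun ω => f i ω ^ 2 + c i ω ^ 2) P := (hsq i).add (hc_sq_int i)
    have hv_int : Integrable ((2 : ℝ) • (fun ω => c i ω * f i ω)) P := (hcf_int i).smul (2 : ℝ)
    have h1 : P[fun ω => D i ω ^ 2|m (i - 1)]
        =ᵐ[P] P[fun ω => f i ω ^ 2 + c i ω ^ 2|m (i - 1)]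
          - P[(2 : ℝ) • (fun ω => c i ω * f i ω)|m (i - 1)] := by
      rw [hdecomp]
      exact condExp_sub hu_int hv_int _
    have h2 : P[fun ω => f i ω ^ 2 + c i ω ^ 2|m (i - 1)]
        =ᵐ[P] P[fun ω => f i ω ^ 2|m (i - 1)] + P[fun ω => c i ω ^ 2|m (i - 1)] :=
      condExp_add (hsq i) (hc_sq_int i) _
    have h3 : P[fun ω => c i ω ^ 2|m (i - 1)] = fun ω => c i ω ^ 2 := by
      refine condExp_of_stronglyMeasurable (hle (i - 1)) ?_ (hc_sq_int i)
      have := (hcSM i).mul (hcSM i)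
      rw [show (fun ω => c i ω ^ 2) = c i * c i from funext fun ω => pow_two _]; exact this
    have h4 : P[(2 : ℝ) • (fun ω => c i ω * f i ω)|m (i - 1)]
        =ᵐ[P] (2 : ℝ) • P[fun ω => c i ω * f i ω|m (i - 1)] :=
      condExp_smul (2 : ℝ) _ _
    have h5 : P[fun ω => c i ω * f i ω|m (i - 1)]
        =ᵐ[P] c i * P[f i|m (i - 1)] := by
      have := condExp_mul_of_stronglyMeasurable_left (μ := P) (hcSM i)
        (g := f i) ((hcf_int i).congr (Filter.Eventually.of_forall fun ω => rfl)) (hfint i)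
      exact this
    filter_upwards [h1, h2, h4, h5] with ω e1 e2 e4 e5
    have hqq : (P[fun ω' => (f i ω') ^ 2|m (i - 1)]) ω = q i ω := by rw [hq' i]
    have hcc : (P[f i|m (i - 1)]) ω = c i ω := by rw [hc' i]
    rw [e1, Pi.sub_apply, e2, Pi.add_apply, e4, Pi.smul_apply, e5, Pi.mul_apply, hcc, h3]
    have hfq : (P[fun ω => f i ω ^ 2|m (i - 1)]) ω = q i ω := hqq
    rw [hfq]
    simp only [smul_eq_mul]
    nlinarith [sq_nonneg (c i ω)]
  have hdiag : ∀ i, ∫ ω, g i ω * g i ω ∂P ≤ ∫ ω, (s i).indicator (q i) ω ∂P := by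
    intro i
    have hgg : ∀ ω, g i ω * g i ω = (e i * fun ω => D i ω ^ 2) ω := by
      intro ω
      rw [Pi.mul_apply, hge i ω]
      rcases he01 i ω with h | h <;> rw [h] <;> ring
    have hint2 : Integrable (e i * fun ω => D i ω ^ 2) P :=
      (hmul_int i i).congr (Filter.Eventually.of_forall hgg)
    have hpull : P[e i * fun ω => D i ω ^ 2|m (i - 1)]
        =ᵐ[P] e i * P[fun ω => D i ω ^ 2|m (i - 1)] :=
      condExp_mul_of_stronglyMeasurable_left (heSM i) hint2 (hDsq_int i)
    calc ∫ ω, g i ω * g i ω ∂P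
        = ∫ ω, (e i * fun ω => D i ω ^ 2) ω ∂P :=
          integral_congr_ae (Filter.Eventually.of_forall hgg)
      _ = ∫ ω, (P[e i * fun ω => D i ω ^ 2|m (i - 1)]) ω ∂P :=
          (integral_condExp (hle (i - 1))).symm
      _ ≤ ∫ ω, (s i).indicator (q i) ω ∂P := by
          refine integral_mono_ae integrable_condExp ((hqint i).indicator (hsmΩ i)) ?_
          filter_upwards [hpull, hcondD i] with ω h1 h2
          rw [h1, Pi.mul_apply]
          by_cases hω : ω ∈ s i
          · have he1 : e i ω = 1 := by simp [hedef, Set.indicator_of_mem hω]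
            rw [he1, one_mul, Set.indicator_of_mem hω]
            exact h2
          · have he0 : e i ω = 0 := by simp [hedef, Set.indicator_of_notMem hω]
            rw [he0, zero_mul, Set.indicator_of_notMem hω]
  have hexp : ∀ ω, N ω ^ 2 = ∑ i ∈ Finset.Icc 1 n, ∑ j ∈ Finset.Icc 1 n, g i ω * g j ω := by
    intro ω
    rw [hNdef]
    rw [sq, Finset.sum_mul_sum]
  have hint_inner : ∀ i, Integrable (fun ω => ∑ j ∈ Finset.Icc 1 n, g i ω * g j ω) P :=
    fun i => integrable_finset_sum _ fun j _ => hmul_int i j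
  have hNsq_int : Integrable (fun ω => N ω ^ 2) P :=
    (integrable_finset_sum _ fun i (_ : i ∈ Finset.Icc 1 n) => hint_inner i).congr
      (Filter.Eventually.of_forall fun ω => (hexp ω).symm)
  have hNsq : ∫ ω, N ω ^ 2 ∂P ≤ η := by
    calc ∫ ω, N ω ^ 2 ∂P
        = ∫ ω, ∑ i ∈ Finset.Icc 1 n, ∑ j ∈ Finset.Icc 1 n, g i ω * g j ω ∂P :=
          integral_congr_ae (Filter.Eventually.of_forall hexp)
      _ = ∑ i ∈ Finset.Icc 1 n, ∫ ω, ∑ j ∈ Finset.Icc 1 n, g i ω * g j ω ∂P :=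
          integral_finset_sum _ fun i _ => hint_inner i
      _ = ∑ i ∈ Finset.Icc 1 n, ∑ j ∈ Finset.Icc 1 n, ∫ ω, g i ω * g j ω ∂P :=
          Finset.sum_congr rfl fun i _ => integral_finset_sum _ fun j _ => hmul_int i j
      _ = ∑ i ∈ Finset.Icc 1 n, ∫ ω, g i ω * g i ω ∂P := by
          refine Finset.sum_congr rfl fun i hi => ?_
          refine Finset.sum_eq_single i (fun j hj hne => ?_) (fun h => absurd hi h)
          rcases lt_or_gt_of_ne hne with h | h
          · calc ∫ ω, g i ω * g j ω ∂P = ∫ ω, g j ω * g i ω ∂P := by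
                  apply integral_congr_ae
                  filter_upwards with ω
                  ring
              _ = 0 := horth j i h
          · exact horth i j h
      _ ≤ ∑ i ∈ Finset.Icc 1 n, ∫ ω, (s i).indicator (q i) ω ∂P :=
          Finset.sum_le_sum fun i _ => hdiag i
      _ = ∫ ω, ∑ i ∈ Finset.Icc 1 n, (s i).indicator (q i) ω ∂P :=
          (integral_finset_sum _ fun i _ => (hqint i).indicator (hsmΩ i)).symm
      _ ≤ ∫ _ω, η ∂P := by
          refine integral_mono_ae
            (integrable_finset_sum _ fun i _ => (hqint i).indicator (hsmΩ i))
            (integrable_const η) ?_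
          filter_upwards [hq0] with ω hq0ω
          have hkey := sum_trunc_le (b := fun j => q j ω) hη.le n fun i _ => hq0ω i
          have hident : ∀ i, (s i).indicator (q i) ω
              = if (∑ j ∈ Finset.Icc 1 i, q j ω) ≤ η then q i ω else 0 := by
            intro i
            by_cases hω : ω ∈ s i
            · rw [Set.indicator_of_mem hω]
              have hω' : ∑ j ∈ Finset.Icc 1 i, q j ω ≤ η := hω
              rw [if_pos hω']
            · rw [Set.indicator_of_notMem hω]
              have hω' : ¬ (∑ j ∈ Finset.Icc 1 i, q j ω ≤ η) := fun h => hω h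
              rw [if_neg hω']
          calc ∑ i ∈ Finset.Icc 1 n, (s i).indicator (q i) ω
              = ∑ i ∈ Finset.Icc 1 n,
                  (if (∑ j ∈ Finset.Icc 1 i, q j ω) ≤ η then q i ω else 0) :=
                Finset.sum_congr rfl fun i _ => hident i
            _ ≤ η := hkey
      _ = η := by simp
  have hcheb : P {ω | ε ≤ |N ω|} ≤ ENNReal.ofReal (η / ε ^ 2) := by
    have hset : {ω | ε ≤ |N ω|} = {ω | ε ^ 2 ≤ N ω ^ 2} := by
      ext ω
      simp only [Set.mem_setOf_eq]
      constructor
      · intro h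
        nlinarith [abs_nonneg (N ω), sq_abs (N ω)]
      · intro h
        nlinarith [abs_nonneg (N ω), sq_abs (N ω)]
    have hmarkov := mul_meas_ge_le_integral_of_nonneg
      (Filter.Eventually.of_forall fun ω => sq_nonneg (N ω)) hNsq_int (ε ^ 2)
    have hε2 : (0 : ℝ) < ε ^ 2 := by positivity
    have h2 : (P {ω | ε ^ 2 ≤ N ω ^ 2}).toReal ≤ η / ε ^ 2 := by
      rw [le_div_iff₀ hε2]
      nlinarith [hmarkov, hNsq, measureReal_def P {ω | ε ^ 2 ≤ N ω ^ 2}]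
    rw [hset]
    calc P {ω | ε ^ 2 ≤ N ω ^ 2}
        = ENNReal.ofReal ((P {ω | ε ^ 2 ≤ N ω ^ 2}).toReal) :=
          (ENNReal.ofReal_toReal (measure_ne_top _ _)).symm
      _ ≤ ENNReal.ofReal (η / ε ^ 2) := ENNReal.ofReal_le_ofReal h2
  have hincl : ∀ᵐ ω ∂P, ω ∈ {ω | ε ≤ |∑ i ∈ Finset.Icc 1 n, (f i ω - c i ω)|} →
      ω ∈ {ω | η < ∑ i ∈ Finset.Icc 1 n, q i ω} ∪ {ω | ε ≤ |N ω|} := by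
    filter_upwards [hq0] with ω hq0ω hM
    by_cases hVn : η < ∑ j ∈ Finset.Icc 1 n, q j ω
    · left
      exact hVn
    · right
      push_neg at hVn
      have hmem : ∀ i ∈ Finset.Icc 1 n, ω ∈ s i := by
        intro i hi
        have hsub : Finset.Icc 1 i ⊆ Finset.Icc 1 n :=
          Finset.Icc_subset_Icc le_rfl (Finset.mem_Icc.1 hi).2
        have hle' : ∑ j ∈ Finset.Icc 1 i, q j ω ≤ ∑ j ∈ Finset.Icc 1 n, q j ω :=
          Finset.sum_le_sum_of_subset_of_nonneg hsub fun j _ _ => hq0ω j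
        exact le_trans hle' hVn
      have hNM : N ω = ∑ i ∈ Finset.Icc 1 n, (f i ω - c i ω) := by
        rw [hNdef]
        refine Finset.sum_congr rfl fun i hi => ?_
        show (s i).indicator (D i) ω = f i ω - c i ω
        rw [Set.indicator_of_mem (hmem i hi), hD' i ω]
      show ε ≤ |N ω|
      rw [hNM]
      exact hM
  refine le_trans (measure_mono_ae hincl) ?_
  refine le_trans (measure_union_le _ _) ?_
  exact add_le_add_right hcheb _



end Aux

/-- Genon-Catalot–Jacod type lemma: if the sums of conditional expectations
converge in probability to `U` and the sums of conditional second moments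
converge in probability to `0`, then the sums converge in probability to `U`. -/
theorem sum_tendstoInMeasure_of_condexp
    {Ω : Type*} {mΩ : MeasurableSpace Ω} (P : Measure Ω) [IsProbabilityMeasure P]
    (ℱ : ℕ → ℕ → MeasurableSpace Ω)
    (hle : ∀ n i, ℱ n i ≤ mΩ)
    (hmono : ∀ n, Monotone (ℱ n))
    (χ : ℕ → ℕ → Ω → ℝ)
    (hmeas : ∀ n i, Measurable[ℱ n i] (χ n i))
    (hsq : ∀ n i, Integrable (fun ω => (χ n i ω) ^ 2) P)
    (U : Ω → ℝ)
    (h1 : TendstoInMeasure P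
      (fun n ω => ∑ i ∈ Finset.Icc 1 n, (P[χ n i | ℱ n (i - 1)]) ω) atTop U)
    (h2 : TendstoInMeasure P
      (fun n ω => ∑ i ∈ Finset.Icc 1 n,
        (P[fun ω' => (χ n i ω') ^ 2 | ℱ n (i - 1)]) ω) atTop (fun _ => 0)) :
    TendstoInMeasure P (fun n ω => ∑ i ∈ Finset.Icc 1 n, χ n i ω) atTop U := by
  rw [tendstoInMeasure_iff_dist] at h1 h2 ⊢
  intro ε hε
  rw [ENNReal.tendsto_atTop_zero]
  intro δ hδ
  have h3 : (3 : ℝ≥0∞) ≠ ⊤ := by norm_num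
  have hδ3 : (0 : ℝ≥0∞) < δ / 3 := ENNReal.div_pos hδ.ne' h3
  set κ : ℝ≥0∞ := min (δ / 3) 1 with hκdef
  have hκpos : 0 < κ := lt_min hδ3 one_pos
  have hκtop : κ ≠ ⊤ := ((min_le_right _ _).trans_lt (by norm_num)).ne
  set r : ℝ := κ.toReal with hrdef
  have hrpos : 0 < r := ENNReal.toReal_pos hκpos.ne' hκtop
  have hκr : ENNReal.ofReal r = κ := ENNReal.ofReal_toReal hκtop
  have hε2 : 0 < ε / 2 := by positivity
  set η : ℝ := r * (ε / 2) ^ 2 with hηdef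
  have hηpos : 0 < η := by positivity
  have H1 := h1 (ε / 2) hε2
  have H2 := h2 η hηpos
  rw [ENNReal.tendsto_atTop_zero] at H1 H2
  obtain ⟨N1, hN1⟩ := H1 (δ / 3) hδ3
  obtain ⟨N2, hN2⟩ := H2 (δ / 3) hδ3
  refine ⟨max N1 N2, fun n hn => ?_⟩
  have hkey := key_estimate (P := P) (ℱ n) (hle n) (hmono n) (χ n) (hmeas n) (hsq n) n
    hηpos hε2
  have hsplit : {ω | ε ≤ dist (∑ i ∈ Finset.Icc 1 n, χ n i ω) (U ω)}
      ⊆ {ω | ε / 2 ≤ dist (∑ i ∈ Finset.Icc 1 n, (P[χ n i|ℱ n (i - 1)]) ω) (U ω)}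
        ∪ {ω | ε / 2 ≤ |∑ i ∈ Finset.Icc 1 n, (χ n i ω - (P[χ n i|ℱ n (i - 1)]) ω)|} := by
    intro ω hω
    simp only [Set.mem_setOf_eq, Set.mem_union, Real.dist_eq] at hω ⊢
    by_contra hcon
    push_neg at hcon
    obtain ⟨hA, hB⟩ := hcon
    have hdec : ∑ i ∈ Finset.Icc 1 n, χ n i ω - U ω
        = (∑ i ∈ Finset.Icc 1 n, (P[χ n i|ℱ n (i - 1)]) ω - U ω)
          + ∑ i ∈ Finset.Icc 1 n, (χ n i ω - (P[χ n i|ℱ n (i - 1)]) ω) := by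
      rw [Finset.sum_sub_distrib]
      ring
    have htri := abs_add_le (∑ i ∈ Finset.Icc 1 n, (P[χ n i|ℱ n (i - 1)]) ω - U ω)
      (∑ i ∈ Finset.Icc 1 n, (χ n i ω - (P[χ n i|ℱ n (i - 1)]) ω))
    rw [← hdec] at htri
    linarith
  have hVsub : {ω | η < ∑ i ∈ Finset.Icc 1 n, (P[fun ω' => (χ n i ω') ^ 2|ℱ n (i - 1)]) ω}
      ⊆ {ω | η ≤ dist (∑ i ∈ Finset.Icc 1 n, (P[fun ω' => (χ n i ω') ^ 2|ℱ n (i - 1)]) ω) 0} := by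
    intro ω hω
    simp only [Set.mem_setOf_eq, Real.dist_eq, sub_zero] at hω ⊢
    exact le_trans hω.le (le_abs_self _)
  have hη2 : η / (ε / 2) ^ 2 = r := by
    rw [hηdef]
    field_simp
  calc P {ω | ε ≤ dist (∑ i ∈ Finset.Icc 1 n, χ n i ω) (U ω)}
      ≤ P ({ω | ε / 2 ≤ dist (∑ i ∈ Finset.Icc 1 n, (P[χ n i|ℱ n (i - 1)]) ω) (U ω)}
          ∪ {ω | ε / 2 ≤ |∑ i ∈ Finset.Icc 1 n, (χ n i ω - (P[χ n i|ℱ n (i - 1)]) ω)|}) :=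
        measure_mono hsplit
    _ ≤ P {ω | ε / 2 ≤ dist (∑ i ∈ Finset.Icc 1 n, (P[χ n i|ℱ n (i - 1)]) ω) (U ω)}
        + P {ω | ε / 2 ≤ |∑ i ∈ Finset.Icc 1 n, (χ n i ω - (P[χ n i|ℱ n (i - 1)]) ω)|} :=
        measure_union_le _ _
    _ ≤ δ / 3 + (δ / 3 + δ / 3) := by
        refine add_le_add (hN1 n (le_trans (le_max_left _ _) hn)) ?_
        refine le_trans hkey ?_
        refine add_le_add ?_ ?_
        · exact le_trans (measure_mono hVsub) (hN2 n (le_trans (le_max_right _ _) hn))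
        · rw [hη2, hκr]
          exact min_le_left _ _
    _ = δ := by
        rw [← add_assoc]
        exact ENNReal.add_thirds δ
end
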